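/- arXiv:2303.09363 — 5 statements merged into one kernel-verified Lean document; each statement's English description precedes it below -/
import Mathlib

section
/- For positive integers s, r, k, N, one has Σ_{n ≤ N} c_r^s(n) c_k^s(n) ≤ N · τ_s(r^s) · τ_s(k^s) · (r^s, k^s)_s. -/
open Finset

/-- Generalized s-GCD `(a,b)_s`: the largest `l^s` dividing both `a` and `b`. -/
def sgcd (s a b : ℕ) : ℕ :=
  (Nat.findGreatest (fun l => l ^ s ∣ a ∧ l ^ s ∣ b) (Nat.gcd a b)) ^ s

/-- Klee's function `Φ_s(n)`. -/
def klee (s n : ℕ) : ℕ := ((Finset.Icc 1 n).filter (fun m => sgcd s m n = 1)).card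

/-- Cohen–Ramanujan sum (exponential form). -/
noncomputable def CRsum (s r n : ℕ) : ℂ :=
  ∑ a ∈ (Finset.Icc 1 (r ^ s)).filter (fun a => sgcd s a (r ^ s) = 1),
    Complex.exp (2 * Real.pi * Complex.I * n * a / (r ^ s))

/-- Cohen–Ramanujan sum (divisor form). -/
def CRsumD (s r n : ℕ) : ℤ :=
  ∑ d ∈ r.divisors.filter (fun d => d ^ s ∣ n),
    ArithmeticFunction.moebius (r / d) * (d : ℤ) ^ s

/-- `τ_s(m)`: number of s-th powers dividing `m`. -/
def taus (s m : ℕ) : ℕ := ((Finset.Icc 1 m).filter (fun l => l ^ s ∣ m)).card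

/-- Jordan totient via tuples. -/
def jordanT (s r : ℕ) : ℕ :=
  (Finset.univ.filter (fun v : Fin s → Fin r =>
    Nat.gcd (Finset.univ.gcd (fun i => (v i : ℕ))) r = 1)).card

/-!
Bounding `|μ| ≤ 1` gives `|c_r^s(n)| ≤ ∑_{d ∣ r, d^s ∣ n} d^s`. Multiplying the two majorants and
summing over `n ≤ N`, each pair `d ∣ r`, `e ∣ k` contributes `d^s e^s ⌊N / lcm(d^s, e^s)⌋`, which is at
most `N · gcd(d^s, e^s) = N · gcd(d, e)^s ≤ N · (r^s, k^s)_s`. There are `τ(r) τ(k)` pairs, and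
`τ_s(r^s) = τ(r)`.
-/

theorem taus_pow_eq_card_divisors {s : ℕ} (hs : s ≠ 0) (r : ℕ) :
    taus s (r ^ s) = r.divisors.card := by
  unfold taus
  congr 1
  ext l
  simp only [mem_filter, mem_Icc, Nat.mem_divisors, Nat.pow_dvd_pow_iff hs]
  constructor
  · rintro ⟨⟨hl, hle⟩, hlr⟩
    exact ⟨hlr, fun hr => by simp [hr, hs] at hle; omega⟩
  · rintro ⟨hlr, hr⟩
    exact ⟨⟨Nat.pos_of_dvd_of_pos hlr (Nat.pos_of_ne_zero hr),
      (Nat.le_of_dvd (Nat.pos_of_ne_zero hr) hlr).trans (Nat.le_self_pow hs r)⟩, hlr⟩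

theorem pow_le_sgcd {s a b l : ℕ} (hs : s ≠ 0) (ha : a ≠ 0) (hla : l ^ s ∣ a) (hlb : l ^ s ∣ b) :
    l ^ s ≤ sgcd s a b := by
  have hl : l ≤ Nat.gcd a b :=
    Nat.le_of_dvd (Nat.gcd_pos_of_pos_left b (Nat.pos_of_ne_zero ha))
      ((dvd_pow_self l hs).trans (Nat.dvd_gcd hla hlb))
  exact Nat.pow_le_pow_left (Nat.le_findGreatest hl ⟨hla, hlb⟩) s

theorem mul_mul_card_filter_dvd_le (a b N : ℕ) :
    a * b * #{n ∈ Icc 1 N | a ∣ n ∧ b ∣ n} ≤ N * Nat.gcd a b := by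
  have hcard : #{n ∈ Icc 1 N | a ∣ n ∧ b ∣ n} = N / Nat.lcm a b := by
    rw [← Nat.Ioc_filter_dvd_card_eq_div]
    exact congrArg card (filter_congr fun n _ => Nat.lcm_dvd_iff.symm)
  calc a * b * #{n ∈ Icc 1 N | a ∣ n ∧ b ∣ n}
      = Nat.gcd a b * (N / Nat.lcm a b * Nat.lcm a b) := by
        rw [hcard, ← Nat.gcd_mul_lcm a b]; ring
    _ ≤ N * Nat.gcd a b := by
        rw [mul_comm N]; exact Nat.mul_le_mul_left _ (Nat.div_mul_le_self N _)

theorem pow_mul_pow_mul_card_le_sgcd {s r k d e : ℕ} (hs : s ≠ 0) (hd : d ∈ r.divisors)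
    (he : e ∈ k.divisors) (N : ℕ) :
    d ^ s * e ^ s * #{n ∈ Icc 1 N | d ^ s ∣ n ∧ e ^ s ∣ n} ≤ N * sgcd s (r ^ s) (k ^ s) := by
  rw [Nat.mem_divisors] at hd he
  have hgcd : Nat.gcd (d ^ s) (e ^ s) ≤ sgcd s (r ^ s) (k ^ s) := by
    rw [Nat.pow_gcd_pow]
    exact pow_le_sgcd hs (pow_ne_zero s hd.2)
      (pow_dvd_pow_of_dvd ((Nat.gcd_dvd_left d e).trans hd.1) s)
      (pow_dvd_pow_of_dvd ((Nat.gcd_dvd_right d e).trans he.1) s)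
  exact (mul_mul_card_filter_dvd_le _ _ N).trans (Nat.mul_le_mul_left N hgcd)

theorem abs_CRsumD_le (s m n : ℕ) :
    |CRsumD s m n| ≤ ∑ d ∈ m.divisors with d ^ s ∣ n, (d : ℤ) ^ s := by
  refine (abs_sum_le_sum_abs _ _).trans (sum_le_sum fun d _ => ?_)
  rw [abs_mul, abs_pow, Nat.abs_cast]
  exact mul_le_of_le_one_left (by positivity) ArithmeticFunction.abs_moebius_le_one

theorem sum_sum_filter_mul_sum_filter {ι α β R : Type*} [CommSemiring R] (S : Finset ι)
    (A : Finset α) (B : Finset β) (P : α → ι → Prop) (Q : β → ι → Prop)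
    [∀ a n, Decidable (P a n)] [∀ b n, Decidable (Q b n)] (f : α → R) (g : β → R) :
    ∑ n ∈ S, (∑ a ∈ A with P a n, f a) * (∑ b ∈ B with Q b n, g b)
      = ∑ a ∈ A, ∑ b ∈ B, f a * g b * #{n ∈ S | P a n ∧ Q b n} := by
  simp_rw [sum_filter, sum_mul_sum]
  rw [sum_comm]
  refine sum_congr rfl fun a _ => ?_
  rw [sum_comm]
  refine sum_congr rfl fun b _ => ?_
  rw [card_filter, Nat.cast_sum, mul_sum]
  refine sum_congr rfl fun n _ => ?_
  rw [ite_zero_mul_ite_zero, Nat.cast_ite, Nat.cast_one, Nat.cast_zero, mul_ite, mul_one, mul_zero]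

theorem sum_CRsumD_mul_le_general (s r k N : ℕ) (hs : 0 < s) :
    (∑ n ∈ Finset.Icc 1 N, CRsumD s r n * CRsumD s k n)
      ≤ (N : ℤ) * taus s (r ^ s) * taus s (k ^ s) * sgcd s (r ^ s) (k ^ s) := by
  calc ∑ n ∈ Icc 1 N, CRsumD s r n * CRsumD s k n
      ≤ ∑ n ∈ Icc 1 N, (∑ d ∈ r.divisors with d ^ s ∣ n, (d : ℤ) ^ s)
          * (∑ e ∈ k.divisors with e ^ s ∣ n, (e : ℤ) ^ s) :=
        sum_le_sum fun n _ => (le_abs_self _).trans <| (abs_mul _ _).trans_le <|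
          mul_le_mul (abs_CRsumD_le s r n) (abs_CRsumD_le s k n) (abs_nonneg _)
            (sum_nonneg fun _ _ => by positivity)
    _ = ∑ d ∈ r.divisors, ∑ e ∈ k.divisors,
          (d : ℤ) ^ s * (e : ℤ) ^ s * #{n ∈ Icc 1 N | d ^ s ∣ n ∧ e ^ s ∣ n} :=
        sum_sum_filter_mul_sum_filter _ _ _ _ _ _ _
    _ ≤ ∑ d ∈ r.divisors, ∑ e ∈ k.divisors, (N : ℤ) * sgcd s (r ^ s) (k ^ s) :=
        sum_le_sum fun d hd => sum_le_sum fun e he => by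
          exact_mod_cast pow_mul_pow_mul_card_le_sgcd hs.ne' hd he N
    _ = (N : ℤ) * taus s (r ^ s) * taus s (k ^ s) * sgcd s (r ^ s) (k ^ s) := by
        simp only [sum_const, nsmul_eq_mul, taus_pow_eq_card_divisors hs.ne']
        ring

theorem sum_CRsumD_mul_le (s r k N : ℕ) (hs : 0 < s) (hr : 0 < r) (hk : 0 < k)
    (hN : 0 < N) :
    (∑ n ∈ Finset.Icc 1 N, CRsumD s r n * CRsumD s k n)
      ≤ (N : ℤ) * taus s (r ^ s) * taus s (k ^ s) * sgcd s (r ^ s) (k ^ s) :=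
  sum_CRsumD_mul_le_general s r k N hs
end

section
/- For positive integers s, r, k, N and h with h ≤ N, one has Σ_{n ≤ N} c_r^s(n) c_k^s(n+h) ≤ 2N · Φ_s(r^s) · τ(k). -/
open Finset

/-!
The divisors `d ∣ k` with `d^s ∣ a` are exactly the divisors of the `s`-th root of `(a, k^s)_s`,
so Möbius inversion gives
`c_k^s(m) = ∑_{d ∣ k} μ(d) ∑_{a ≤ k^s, d^s ∣ a} e(m a / k^s)`, and each inner sum is a complete
sum of `(k/d)^s`-th roots of unity, equal to `(k/d)^s` if `(k/d)^s ∣ m` and `0` otherwise.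
Hence `∑_{n ≤ N} |c_k^s(n + h)| ≤ ∑_{d ∣ k} (k/d)^s · #{n ≤ N : (k/d)^s ∣ n + h} ≤ τ(k) (N + h)`,
while trivially `|c_r^s(n)| ≤ Φ_s(r^s)`.
-/

open ArithmeticFunction
open scoped ArithmeticFunction.Moebius

def sgcdRoot (s a b : ℕ) : ℕ :=
  Nat.findGreatest (fun l => l ^ s ∣ a ∧ l ^ s ∣ b) (Nat.gcd a b)

lemma sgcd_eq_sgcdRoot_pow (s a b : ℕ) : sgcd s a b = sgcdRoot s a b ^ s := rfl

lemma dvd_sgcdRoot_iff {s a b l : ℕ} (hs : s ≠ 0) (hab : Nat.gcd a b ≠ 0) :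
    l ∣ sgcdRoot s a b ↔ l ^ s ∣ a ∧ l ^ s ∣ b := by
  set G := sgcdRoot s a b
  have hG : G ^ s ∣ a ∧ G ^ s ∣ b :=
    Nat.findGreatest_spec (P := fun l => l ^ s ∣ a ∧ l ^ s ∣ b)
      (Nat.one_le_iff_ne_zero.mpr hab) (by simp)
  constructor
  · intro hl
    have hpow := pow_dvd_pow_of_dvd hl s
    exact ⟨hpow.trans hG.1, hpow.trans hG.2⟩
  · rintro ⟨hla, hlb⟩
    -- `lcm l G` is again an admissible base, so maximality of `G` forces `lcm l G = G`.
    set L := Nat.lcm l G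
    have hLa : L ^ s ∣ a := Nat.pow_lcm_pow ▸ Nat.lcm_dvd hla hG.1
    have hLb : L ^ s ∣ b := Nat.pow_lcm_pow ▸ Nat.lcm_dvd hlb hG.2
    have hLgcd : L ^ s ≤ Nat.gcd a b := Nat.le_of_dvd (Nat.pos_of_ne_zero hab) (Nat.dvd_gcd hLa hLb)
    have hLG : L ≤ G := Nat.le_findGreatest ((Nat.le_self_pow hs L).trans hLgcd) ⟨hLa, hLb⟩
    have hL0 : L ≠ 0 := by
      rintro hL
      rw [hL, zero_pow hs, zero_dvd_iff] at hLa hLb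
      simp [hLa, hLb] at hab
    have hGL : G ≤ L := Nat.le_of_dvd (Nat.pos_of_ne_zero hL0) (Nat.dvd_lcm_right l G)
    exact (le_antisymm hLG hGL) ▸ Nat.dvd_lcm_left l G

lemma filter_pow_dvd_divisors_eq {s a k : ℕ} (hs : s ≠ 0) (hk : k ≠ 0) :
    k.divisors.filter (fun d => d ^ s ∣ a) = (sgcdRoot s a (k ^ s)).divisors := by
  have hgcd : Nat.gcd a (k ^ s) ≠ 0 := Nat.gcd_ne_zero_right (pow_ne_zero s hk)
  have hdvd : ∀ l, l ∣ sgcdRoot s a (k ^ s) ↔ l ^ s ∣ a ∧ l ∣ k := fun l => by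
    rw [dvd_sgcdRoot_iff hs hgcd, Nat.pow_dvd_pow_iff hs]
  have hG0 : sgcdRoot s a (k ^ s) ≠ 0 := fun h0 =>
    hk (Nat.eq_zero_of_zero_dvd ((hdvd 0).mp (h0 ▸ dvd_rfl)).2)
  ext d
  simp only [Finset.mem_filter, Nat.mem_divisors, hdvd]
  tauto

lemma sum_moebius_filter_pow_dvd {s a k : ℕ} (hs : s ≠ 0) (hk : k ≠ 0) :
    ∑ d ∈ k.divisors.filter (fun d => d ^ s ∣ a), (μ d : ℤ)
      = if sgcd s a (k ^ s) = 1 then 1 else 0 := by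
  rw [filter_pow_dvd_divisors_eq hs hk, ← coe_mul_zeta_apply, moebius_mul_coe_zeta, one_apply,
    sgcd_eq_sgcdRoot_pow]
  simp only [Nat.pow_eq_one, hs, or_false]

lemma sum_pow_Icc_of_pow_eq_one {K : Type*} [Field K] [DecidableEq K] {x : K} {Q : ℕ}
    (hx : x ^ Q = 1) :
    ∑ b ∈ Finset.Icc 1 Q, x ^ b = if x = 1 then (Q : K) else 0 := by
  split_ifs with h1
  · simp [h1]
  · rw [← Finset.Ico_add_one_right_eq_Icc, Finset.sum_Ico_eq_sum_range, Nat.add_sub_cancel]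
    simp only [pow_add, pow_one, ← Finset.mul_sum, geom_sum_eq h1, hx, sub_self, zero_div,
      mul_zero]

lemma sum_Icc_exp_eq (Q m : ℕ) (hQ : Q ≠ 0) :
    ∑ b ∈ Finset.Icc 1 Q, Complex.exp (2 * Real.pi * Complex.I * m * b / Q)
      = if Q ∣ m then (Q : ℂ) else 0 := by
  set ζ := Complex.exp (2 * Real.pi * Complex.I / Q) with hζdef
  have hζ : IsPrimitiveRoot ζ Q := Complex.isPrimitiveRoot_exp Q hQ
  have hterm : ∀ b : ℕ, Complex.exp (2 * Real.pi * Complex.I * m * b / Q) = (ζ ^ m) ^ b :=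
    fun b => by
      rw [hζdef, ← pow_mul, ← Complex.exp_nat_mul]
      push_cast
      ring_nf
  have hζm : (ζ ^ m) ^ Q = 1 := by rw [← pow_mul, mul_comm, pow_mul, hζ.pow_eq_one, one_pow]
  simp only [hterm, sum_pow_Icc_of_pow_eq_one hζm, hζ.pow_eq_one_iff_dvd m]

lemma CRsum_eq_sum_moebius {s k : ℕ} (m : ℕ) (hs : s ≠ 0) (hk : k ≠ 0) :
    CRsum s k m = ∑ d ∈ k.divisors, (μ d : ℂ) *
      ∑ a ∈ (Finset.Icc 1 (k ^ s)).filter (fun a => d ^ s ∣ a),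
        Complex.exp (2 * Real.pi * Complex.I * m * a / (k ^ s)) := by
  set e : ℕ → ℂ := fun a => Complex.exp (2 * Real.pi * Complex.I * m * a / (k ^ s))
  calc CRsum s k m
      = ∑ a ∈ Finset.Icc 1 (k ^ s),
          ((∑ d ∈ k.divisors.filter (fun d => d ^ s ∣ a), (μ d : ℤ) : ℤ) : ℂ) * e a := by
        rw [CRsum, Finset.sum_filter]
        refine Finset.sum_congr rfl fun a _ => ?_
        rw [sum_moebius_filter_pow_dvd hs hk]
        split_ifs <;> simp [e]
    _ = ∑ a ∈ Finset.Icc 1 (k ^ s), ∑ d ∈ k.divisors,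
          if d ^ s ∣ a then (μ d : ℂ) * e a else 0 := by
        simp only [Int.cast_sum, Finset.sum_mul, Finset.sum_filter, apply_ite (Int.cast (R := ℂ)),
          Int.cast_zero, ite_mul, zero_mul]
    _ = ∑ d ∈ k.divisors, (μ d : ℂ) * ∑ a ∈ (Finset.Icc 1 (k ^ s)).filter (fun a => d ^ s ∣ a),
          e a := by
        rw [Finset.sum_comm]
        simp only [Finset.mul_sum, Finset.sum_filter, mul_ite, mul_zero]

lemma sum_filter_dvd_Icc_exp (D Q m : ℕ) (hD : D ≠ 0) :
    ∑ a ∈ (Finset.Icc 1 (D * Q)).filter (fun a => D ∣ a),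
        Complex.exp (2 * Real.pi * Complex.I * m * a / (D * Q : ℕ))
      = ∑ b ∈ Finset.Icc 1 Q, Complex.exp (2 * Real.pi * Complex.I * m * b / Q) := by
  have hD0 : 0 < D := Nat.pos_of_ne_zero hD
  have himage :
      (Finset.Icc 1 (D * Q)).filter (fun a => D ∣ a) = (Finset.Icc 1 Q).image (D * ·) := by
    ext a
    simp only [Finset.mem_filter, Finset.mem_Icc, Finset.mem_image]
    constructor
    · rintro ⟨⟨ha1, haQ⟩, b, rfl⟩
      exact ⟨b, ⟨Nat.pos_of_mul_pos_left ha1, Nat.le_of_mul_le_mul_left haQ hD0⟩, rfl⟩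
    · rintro ⟨b, ⟨hb1, hbQ⟩, rfl⟩
      exact ⟨⟨Nat.mul_pos hD0 hb1, Nat.mul_le_mul_left D hbQ⟩, dvd_mul_right D b⟩
  rw [himage, Finset.sum_image fun _ _ _ _ h => Nat.eq_of_mul_eq_mul_left hD0 h]
  refine Finset.sum_congr rfl fun b _ => ?_
  have hDC : (D : ℂ) ≠ 0 := Nat.cast_ne_zero.mpr hD
  push_cast
  rw [mul_comm (D : ℂ) b, ← mul_assoc, mul_comm (D : ℂ) Q, mul_div_mul_right _ _ hDC]

lemma norm_CRsum_le_klee (s r n : ℕ) : ‖CRsum s r n‖ ≤ klee s (r ^ s) := by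
  have hnorm : ∀ a : ℕ, ‖Complex.exp (2 * Real.pi * Complex.I * n * a / (r ^ s))‖ = 1 := fun a => by
    rw [show 2 * Real.pi * Complex.I * n * a / (r ^ s)
        = ((2 * Real.pi * n * a / r ^ s : ℝ) : ℂ) * Complex.I by push_cast; ring,
      Complex.norm_exp_ofReal_mul_I]
  refine (norm_sum_le _ _).trans_eq ?_
  simp [hnorm, klee]

lemma norm_CRsum_le_sum_divisors {s k : ℕ} (m : ℕ) (hs : s ≠ 0) (hk : k ≠ 0) :
    ‖CRsum s k m‖ ≤ ((∑ d ∈ k.divisors, if (k / d) ^ s ∣ m then (k / d) ^ s else 0 : ℕ) : ℝ) := by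
  rw [CRsum_eq_sum_moebius m hs hk]
  push_cast
  refine (norm_sum_le _ _).trans (Finset.sum_le_sum fun d hd => ?_)
  have hdk : d * (k / d) = k := Nat.mul_div_cancel' (Nat.dvd_of_mem_divisors hd)
  have hkd : (k / d) ^ s ≠ 0 := pow_ne_zero s fun h0 => hk (by rw [← hdk, h0, mul_zero])
  have hinner := sum_filter_dvd_Icc_exp (d ^ s) ((k / d) ^ s) m
    (pow_ne_zero s (Nat.ne_of_gt (Nat.pos_of_mem_divisors hd)))
  rw [← mul_pow, hdk, sum_Icc_exp_eq _ m hkd] at hinner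
  push_cast at hinner
  rw [norm_mul, hinner]
  calc ‖(μ d : ℂ)‖ * ‖if (k / d) ^ s ∣ m then (((k / d : ℕ) : ℂ) ^ s) else 0‖
      ≤ 1 * ‖if (k / d) ^ s ∣ m then (((k / d : ℕ) : ℂ) ^ s) else 0‖ := by
        gcongr
        exact_mod_cast abs_moebius_le_one
    _ = if (k / d) ^ s ∣ m then ((k / d : ℕ) : ℝ) ^ s else 0 := by
        split_ifs <;> simp

lemma sum_Icc_ite_dvd_add_le (D N h : ℕ) :
    ∑ n ∈ Finset.Icc 1 N, (if D ∣ n + h then D else 0) ≤ N + h := by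
  rw [← Finset.sum_filter, Finset.sum_const, smul_eq_mul]
  have hcard : ((Finset.Icc 1 N).filter (fun n => D ∣ n + h)).card ≤ (N + h) / D := by
    rw [← Nat.Ioc_filter_dvd_card_eq_div]
    refine Finset.card_le_card_of_injOn (· + h) (fun n hn => ?_) fun _ _ _ _ => Nat.add_right_cancel
    simp only [Finset.coe_filter, Set.mem_ofPred_eq, Finset.mem_Icc, Finset.mem_Ioc] at hn ⊢
    exact ⟨⟨by omega, by omega⟩, hn.2⟩
  calc ((Finset.Icc 1 N).filter (fun n => D ∣ n + h)).card * D ≤ (N + h) / D * D := by gcongr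
    _ ≤ N + h := Nat.div_mul_le_self _ _

lemma sum_norm_CRsum_shift_le {s k : ℕ} (N h : ℕ) (hs : s ≠ 0) (hk : k ≠ 0) :
    ∑ n ∈ Finset.Icc 1 N, ‖CRsum s k (n + h)‖ ≤ k.divisors.card * (N + h : ℝ) := by
  calc ∑ n ∈ Finset.Icc 1 N, ‖CRsum s k (n + h)‖
      ≤ ∑ n ∈ Finset.Icc 1 N,
          ((∑ d ∈ k.divisors, if (k / d) ^ s ∣ n + h then (k / d) ^ s else 0 : ℕ) : ℝ) :=
        Finset.sum_le_sum fun n _ => norm_CRsum_le_sum_divisors (n + h) hs hk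
    _ = ((∑ d ∈ k.divisors, ∑ n ∈ Finset.Icc 1 N,
          if (k / d) ^ s ∣ n + h then (k / d) ^ s else 0 : ℕ) : ℝ) := by
        rw [Finset.sum_comm]
        push_cast
        rfl
    _ ≤ ((∑ _d ∈ k.divisors, (N + h) : ℕ) : ℝ) := by
        gcongr with d
        exact sum_Icc_ite_dvd_add_le _ N h
    _ = k.divisors.card * (N + h : ℝ) := by simp

theorem sum_CRsum_shift_le_general (s r k N h : ℕ) (hs : 0 < s) (hk : 0 < k) (hhN : h ≤ N) :
    (∑ n ∈ Finset.Icc 1 N, CRsum s r n * CRsum s k (n + h)).re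
      ≤ 2 * (N : ℝ) * klee s (r ^ s) * k.divisors.card := by
  have hhN' : (h : ℝ) ≤ N := by exact_mod_cast hhN
  calc (∑ n ∈ Finset.Icc 1 N, CRsum s r n * CRsum s k (n + h)).re
      ≤ ∑ n ∈ Finset.Icc 1 N, ‖CRsum s r n‖ * ‖CRsum s k (n + h)‖ := by
        simp_rw [← norm_mul]
        exact (Complex.re_le_norm _).trans (norm_sum_le _ _)
    _ ≤ ∑ n ∈ Finset.Icc 1 N, (klee s (r ^ s) : ℝ) * ‖CRsum s k (n + h)‖ := by
        gcongr with n
        exact norm_CRsum_le_klee s r n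
    _ ≤ klee s (r ^ s) * (k.divisors.card * (N + h : ℝ)) := by
        rw [← Finset.mul_sum]
        gcongr
        exact sum_norm_CRsum_shift_le N h hs.ne' hk.ne'
    _ ≤ 2 * (N : ℝ) * klee s (r ^ s) * k.divisors.card := by
        nlinarith [mul_nonneg (Nat.cast_nonneg (α := ℝ) (klee s (r ^ s)))
          (Nat.cast_nonneg (α := ℝ) k.divisors.card)]

theorem sum_CRsum_shift_le (s r k N h : ℕ) (hs : 0 < s) (hr : 0 < r) (hk : 0 < k)
    (hh : 0 < h) (hhN : h ≤ N) :
    (∑ n ∈ Finset.Icc 1 N, CRsum s r n * CRsum s k (n + h)).re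
      ≤ 2 * (N : ℝ) * klee s (r ^ s) * k.divisors.card :=
  sum_CRsum_shift_le_general s r k N h hs hk hhN
end

section
/- Let s, r, k be positive integers with (r^s, k^s)_s = 1. If a, b range with 1 ≤ a ≤ r^s, (a, r^s)_s = 1 and 1 ≤ b ≤ k^s, (b, k^s)_s = 1, then the Φ_s(r^s)·Φ_s(k^s) values a·k^s + b·r^s are pairwise distinct and each satisfies (a k^s + b r^s, r^s k^s)_s = 1; i.e., they form an s-reduced residue system modulo r^s k^s. -/
open Finset

/-! Since `(r^s, k^s)_s = 1` forces `r` and `k` to be coprime, `a k^s + b r^s` determines `a`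
modulo `r^s`, hence `a` and then `b`. If a prime `p` has `p^s` dividing both `a k^s + b r^s` and
`(r k)^s`, then `p` divides `r` (say) but not `k`, so `p^s ∣ a k^s` gives `p^s ∣ a`, contradicting
`(a, r^s)_s = 1`. -/

section SGcd

variable {s a b : ℕ}

theorem sgcd_eq_one_iff (hs : s ≠ 0) :
    sgcd s a b = 1 ↔ ∀ l, l ^ s ∣ a → l ^ s ∣ b → l = 1 := by
  unfold sgcd
  set P := fun l => l ^ s ∣ a ∧ l ^ s ∣ b
  constructor
  · intro h l hla hlb
    have hgreatest : Nat.findGreatest P (a.gcd b) = 1 := (pow_eq_one_iff.1 h).resolve_right hs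
    have hg : a.gcd b ≠ 0 := by
      rintro hg
      rw [hg, Nat.findGreatest_zero] at hgreatest
      exact zero_ne_one hgreatest
    have hl : l ∣ a.gcd b :=
      Nat.dvd_gcd ((dvd_pow_self l hs).trans hla) ((dvd_pow_self l hs).trans hlb)
    have hl_le : l ≤ 1 :=
      hgreatest ▸ Nat.le_findGreatest (P := P) (Nat.le_of_dvd (Nat.pos_of_ne_zero hg) hl) ⟨hla, hlb⟩
    have hl0 : l ≠ 0 := by rintro rfl; exact hg (Nat.eq_zero_of_zero_dvd hl)
    omega
  · intro h
    have hg : 0 < a.gcd b := by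
      by_contra! hg
      obtain ⟨rfl, rfl⟩ := Nat.gcd_eq_zero_iff.1 (Nat.le_zero.1 hg)
      exact absurd (h 2 (dvd_zero _) (dvd_zero _)) (by norm_num)
    have hP := Nat.findGreatest_spec (P := P) hg (by simp [P])
    rw [h _ hP.1 hP.2, one_pow]

theorem sgcd_eq_one_iff_prime (hs : s ≠ 0) :
    sgcd s a b = 1 ↔ ∀ p, p.Prime → p ^ s ∣ a → ¬p ^ s ∣ b := by
  rw [sgcd_eq_one_iff hs]
  constructor
  · intro h p hp hpa hpb
    exact hp.ne_one (h p hpa hpb)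
  · intro h l hla hlb
    by_contra hl
    obtain ⟨p, hp, hpl⟩ := Nat.exists_prime_and_dvd hl
    have hpl_pow : p ^ s ∣ l ^ s := pow_dvd_pow_of_dvd hpl s
    exact h p hp (hpl_pow.trans hla) (hpl_pow.trans hlb)

theorem sgcd_pow_pow_eq_one_iff {r k : ℕ} (hs : s ≠ 0) :
    sgcd s (r ^ s) (k ^ s) = 1 ↔ r.Coprime k := by
  simp only [sgcd_eq_one_iff hs, Nat.pow_dvd_pow_iff hs]
  constructor
  · intro h
    exact Nat.coprime_of_dvd fun p hp hpr hpk => hp.ne_one (h p hpr hpk)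
  · intro h l hlr hlk
    exact Nat.eq_one_of_dvd_one (h ▸ Nat.dvd_gcd hlr hlk)

end SGcd

theorem eq_and_eq_of_mul_add_mul_eq {m n a₁ a₂ b₁ b₂ : ℕ} (hmn : m.Coprime n)
    (ha₁ : 1 ≤ a₁) (ha₁' : a₁ ≤ m) (ha₂ : 1 ≤ a₂) (ha₂' : a₂ ≤ m)
    (h : a₁ * n + b₁ * m = a₂ * n + b₂ * m) : a₁ = a₂ ∧ b₁ = b₂ := by
  have hZ : (a₁ * n + b₁ * m : ℤ) = a₂ * n + b₂ * m := by exact_mod_cast h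
  have hdvd : (m : ℤ) ∣ (a₁ : ℤ) - a₂ :=
    (Nat.isCoprime_iff_coprime.2 hmn).dvd_of_dvd_mul_right ⟨b₂ - b₁, by linear_combination hZ⟩
  have ha : a₁ = a₂ := by
    have := Int.eq_zero_of_abs_lt_dvd hdvd (by rw [abs_sub_lt_iff]; omega)
    omega
  subst ha
  exact ⟨rfl, Nat.eq_of_mul_eq_mul_right (by omega) (Nat.add_left_cancel h)⟩

theorem pow_dvd_of_pow_dvd_mul_pow_add_mul_pow {p r k a b s : ℕ} (hpk : p.Coprime k)
    (hpr : p ∣ r) (h : p ^ s ∣ a * k ^ s + b * r ^ s) : p ^ s ∣ a := by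
  have hb : p ^ s ∣ b * r ^ s := dvd_mul_of_dvd_right (pow_dvd_pow_of_dvd hpr s) b
  exact (hpk.pow s s).dvd_of_dvd_mul_right ((Nat.dvd_add_left hb).1 h)

theorem sgcd_mul_pow_add_mul_pow_eq_one {s r k a b : ℕ} (hs : s ≠ 0) (hrk : r.Coprime k)
    (ha : sgcd s a (r ^ s) = 1) (hb : sgcd s b (k ^ s) = 1) :
    sgcd s (a * k ^ s + b * r ^ s) (r ^ s * k ^ s) = 1 := by
  rw [sgcd_eq_one_iff_prime hs] at ha hb ⊢
  intro p hp hpN hprk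
  rw [← mul_pow, Nat.pow_dvd_pow_iff hs] at hprk
  rcases hp.dvd_mul.1 hprk with hpr | hpk
  · exact ha p hp (pow_dvd_of_pow_dvd_mul_pow_add_mul_pow (hrk.coprime_dvd_left hpr) hpr hpN)
      (pow_dvd_pow_of_dvd hpr s)
  · rw [add_comm] at hpN
    exact hb p hp (pow_dvd_of_pow_dvd_mul_pow_add_mul_pow (hrk.symm.coprime_dvd_left hpk) hpk hpN)
      (pow_dvd_pow_of_dvd hpk s)

theorem sReduced_residue_system_general (s r k : ℕ) (hs : 0 < s)
    (hcop : sgcd s (r ^ s) (k ^ s) = 1) :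
    (∀ a₁ b₁ a₂ b₂ : ℕ,
        1 ≤ a₁ → a₁ ≤ r ^ s → sgcd s a₁ (r ^ s) = 1 →
        1 ≤ b₁ → b₁ ≤ k ^ s → sgcd s b₁ (k ^ s) = 1 →
        1 ≤ a₂ → a₂ ≤ r ^ s → sgcd s a₂ (r ^ s) = 1 →
        1 ≤ b₂ → b₂ ≤ k ^ s → sgcd s b₂ (k ^ s) = 1 →
        a₁ * k ^ s + b₁ * r ^ s = a₂ * k ^ s + b₂ * r ^ s → a₁ = a₂ ∧ b₁ = b₂) ∧
      (∀ a b : ℕ,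
        1 ≤ a → a ≤ r ^ s → sgcd s a (r ^ s) = 1 →
        1 ≤ b → b ≤ k ^ s → sgcd s b (k ^ s) = 1 →
        sgcd s (a * k ^ s + b * r ^ s) (r ^ s * k ^ s) = 1) := by
  have hrk : r.Coprime k := (sgcd_pow_pow_eq_one_iff hs.ne').1 hcop
  exact ⟨fun a₁ b₁ a₂ b₂ ha₁ ha₁' _ _ _ _ ha₂ ha₂' _ _ _ _ h =>
      eq_and_eq_of_mul_add_mul_eq (hrk.pow s s) ha₁ ha₁' ha₂ ha₂' h,
    fun a b _ _ ha _ _ hb => sgcd_mul_pow_add_mul_pow_eq_one hs.ne' hrk ha hb⟩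

theorem sReduced_residue_system (s r k : ℕ) (hs : 0 < s) (hr : 0 < r) (hk : 0 < k)
    (hcop : sgcd s (r ^ s) (k ^ s) = 1) :
    (∀ a₁ b₁ a₂ b₂ : ℕ,
        1 ≤ a₁ → a₁ ≤ r ^ s → sgcd s a₁ (r ^ s) = 1 →
        1 ≤ b₁ → b₁ ≤ k ^ s → sgcd s b₁ (k ^ s) = 1 →
        1 ≤ a₂ → a₂ ≤ r ^ s → sgcd s a₂ (r ^ s) = 1 →
        1 ≤ b₂ → b₂ ≤ k ^ s → sgcd s b₂ (k ^ s) = 1 →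
        a₁ * k ^ s + b₁ * r ^ s = a₂ * k ^ s + b₂ * r ^ s → a₁ = a₂ ∧ b₁ = b₂) ∧
      (∀ a b : ℕ,
        1 ≤ a → a ≤ r ^ s → sgcd s a (r ^ s) = 1 →
        1 ≤ b → b ≤ k ^ s → sgcd s b (k ^ s) = 1 →
        sgcd s (a * k ^ s + b * r ^ s) (r ^ s * k ^ s) = 1) :=
  sReduced_residue_system_general s r k hs hcop
end

section
/- For positive integers s, k and n, the Cohen-Ramanujan expansion J_k(n)/n^k = Σ_{q=1}^∞ [μ(q) / (ζ(s+k) J_{s+k}(q))] · c_q^s(n^s) holds, the series converging absolutely. -/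
/-!
The summand `f q = μ q * c_q^s(n^s) / J_t(q)`, `t = s + k`, is multiplicative and vanishes off the
squarefree numbers. It is `O(q^(-t))`: `|c_q^s(n^s)| ≤ σ_s(n)`, and `q^t / J_t(q)` is a partial
Euler product of `ζ(t)`, hence at most `ζ(t)`. So `∑ f` is the Euler product of the factors
`1 + f p`, and from `c_p^s(n^s) = p^s [p ∣ n] - 1` and `J_t(p) = p^t - 1` one gets
`1 + f p = (1 - p^(-k))^[p ∣ n] * (1 - p^(-t))⁻¹`. Hence `∑ f = ζ(t) ∏_{p ∣ n} (1 - p^(-k))`,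
and `∏_{p ∣ n} (1 - p^(-k)) = J_k(n) / n^k`.
-/

open Finset

/-- Riemann zeta as a real series (for real arguments > 1). -/
noncomputable def zetaR (t : ℝ) : ℝ := ∑' n : ℕ, 1 / ((n : ℝ) + 1) ^ t

/-- Jordan totient with real exponent: `J_t(n) = n^t ∏_{p ∣ n} (1 - p^{-t})`. -/
noncomputable def jordanR (t : ℝ) (n : ℕ) : ℝ :=
  (n : ℝ) ^ t * ∏ p ∈ n.primeFactors, (1 - (p : ℝ) ^ (-t))

/-- Sum-of-divisors function with a real exponent. -/
noncomputable def sigmaR (t : ℝ) (n : ℕ) : ℝ := ∑ d ∈ n.divisors, (d : ℝ) ^ t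

/-- `k` is s-power-free: no s-th power greater than 1 divides `k`. -/
def SPowFree (s k : ℕ) : Prop := ∀ l : ℕ, 1 < l → ¬ l ^ s ∣ k

open scoped ArithmeticFunction.Moebius ArithmeticFunction.sigma

namespace CohenRamanujan

def powIfPowDvd (s m : ℕ) : ArithmeticFunction ℤ :=
  ⟨fun d => if d ≠ 0 ∧ d ^ s ∣ m then (d : ℤ) ^ s else 0, by simp⟩

theorem powIfPowDvd_apply {s m d : ℕ} (hd : d ≠ 0) :
    powIfPowDvd s m d = if d ^ s ∣ m then (d : ℤ) ^ s else 0 := by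
  simp [powIfPowDvd, hd]

theorem pow_mul_dvd_iff_of_coprime {a b : ℕ} (s m : ℕ) (hab : a.Coprime b) :
    (a * b) ^ s ∣ m ↔ a ^ s ∣ m ∧ b ^ s ∣ m := by
  rw [mul_pow]
  exact ⟨fun h => ⟨(dvd_mul_right _ _).trans h, (dvd_mul_left _ _).trans h⟩,
    fun h => (hab.pow s s).mul_dvd_of_dvd_of_dvd h.1 h.2⟩

theorem isMultiplicative_powIfPowDvd (s m : ℕ) : (powIfPowDvd s m).IsMultiplicative := by
  refine ArithmeticFunction.IsMultiplicative.iff_ne_zero.2 ⟨by simp [powIfPowDvd], ?_⟩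
  intro a b ha hb hab
  simp only [powIfPowDvd_apply ha, powIfPowDvd_apply hb, powIfPowDvd_apply (mul_ne_zero ha hb),
    pow_mul_dvd_iff_of_coprime s m hab]
  split_ifs <;> simp_all [mul_pow]

theorem CRsumD_eq_moebius_mul (s m r : ℕ) : CRsumD s r m = (μ * powIfPowDvd s m) r := by
  rw [ArithmeticFunction.mul_apply,
    Nat.sum_divisorsAntidiagonal' (f := fun x y => μ x * powIfPowDvd s m y), CRsumD, sum_filter]
  refine sum_congr rfl fun d hd => ?_
  rw [powIfPowDvd_apply (Nat.pos_of_mem_divisors hd).ne']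
  split_ifs <;> simp

theorem isMultiplicative_moebius_mul_powIfPowDvd (s m : ℕ) :
    (μ * powIfPowDvd s m).IsMultiplicative :=
  ArithmeticFunction.isMultiplicative_moebius.mul (isMultiplicative_powIfPowDvd s m)

theorem CRsumD_one (s m : ℕ) : CRsumD s 1 m = 1 := by
  rw [CRsumD_eq_moebius_mul, (isMultiplicative_moebius_mul_powIfPowDvd s m).map_one]

theorem CRsumD_mul_of_coprime (s m : ℕ) {a b : ℕ} (hab : a.Coprime b) :
    CRsumD s (a * b) m = CRsumD s a m * CRsumD s b m := by
  simp only [CRsumD_eq_moebius_mul]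
  exact (isMultiplicative_moebius_mul_powIfPowDvd s m).map_mul_of_coprime hab

theorem CRsumD_prime (s m : ℕ) {p : ℕ} (hp : p.Prime) :
    CRsumD s p m = (if p ^ s ∣ m then (p : ℤ) ^ s else 0) - 1 := by
  rw [CRsumD, sum_filter, hp.divisors, sum_pair hp.one_lt.ne, Nat.div_self hp.pos, Nat.div_one,
    ArithmeticFunction.moebius_apply_prime hp]
  split_ifs <;> simp_all [neg_add_eq_sub]

theorem abs_CRsumD_pow_le_sigma {s n : ℕ} (hs : s ≠ 0) (hn : n ≠ 0) (r : ℕ) :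
    |CRsumD s r (n ^ s)| ≤ σ s n := by
  calc |CRsumD s r (n ^ s)|
      ≤ ∑ d ∈ r.divisors with d ^ s ∣ n ^ s, |μ (r / d) * (d : ℤ) ^ s| := abs_sum_le_sum_abs _ _
    _ ≤ ∑ d ∈ r.divisors with d ^ s ∣ n ^ s, (d : ℤ) ^ s := by
        refine sum_le_sum fun d _ => ?_
        rw [abs_mul, abs_pow, Nat.abs_cast]
        exact mul_le_of_le_one_left (by positivity) ArithmeticFunction.abs_moebius_le_one
    _ ≤ ∑ d ∈ n.divisors, (d : ℤ) ^ s := by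
        refine sum_le_sum_of_subset_of_nonneg (fun d hd => ?_) (fun _ _ _ => by positivity)
        exact Nat.mem_divisors.2 ⟨(Nat.pow_dvd_pow_iff hs).1 (mem_filter.1 hd).2, hn⟩
    _ = σ s n := by simp [ArithmeticFunction.sigma_apply]


theorem jordanR_one (t : ℝ) : jordanR t 1 = 1 := by simp [jordanR]

theorem jordanR_mul_of_coprime (t : ℝ) {a b : ℕ} (hab : a.Coprime b) :
    jordanR t (a * b) = jordanR t a * jordanR t b := by
  rcases eq_or_ne a 0 with rfl | ha
  · simp [(Nat.coprime_zero_left b).1 hab, jordanR_one]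
  rcases eq_or_ne b 0 with rfl | hb
  · simp [(Nat.coprime_zero_right a).1 hab, jordanR_one]
  rw [jordanR, jordanR, jordanR, Nat.cast_mul, Real.mul_rpow (by positivity) (by positivity),
    hab.primeFactors_mul, prod_union hab.disjoint_primeFactors]
  ring

theorem jordanR_prime {p : ℕ} (hp : p.Prime) (t : ℝ) : jordanR t p = (p : ℝ) ^ t - 1 := by
  have hp0 : (0 : ℝ) < p := by exact_mod_cast hp.pos
  rw [jordanR, hp.primeFactors, prod_singleton, mul_sub, mul_one, ← Real.rpow_add hp0,
    add_neg_cancel, Real.rpow_zero]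

theorem one_sub_rpow_neg_pos {p : ℕ} (hp : p.Prime) {t : ℝ} (ht : 0 < t) :
    0 < 1 - (p : ℝ) ^ (-t) :=
  sub_pos.2 <| Real.rpow_lt_one_of_one_lt_of_neg (by exact_mod_cast hp.one_lt) (neg_neg_of_pos ht)

theorem jordanR_pos {t : ℝ} (ht : 0 < t) {q : ℕ} (hq : q ≠ 0) : 0 < jordanR t q :=
  mul_pos (by positivity) <|
    prod_pos fun p hp => one_sub_rpow_neg_pos (Nat.prime_of_mem_primeFactors hp) ht

noncomputable def rpowNegHom {t : ℝ} (ht : t ≠ 0) : ℕ →*₀ ℝ where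
  toFun n := (n : ℝ) ^ (-t)
  map_zero' := by simp [ht]
  map_one' := by simp
  map_mul' a b := by simp [Real.mul_rpow]

theorem summable_rpow_neg {t : ℝ} (ht : 1 < t) : Summable fun n : ℕ => (n : ℝ) ^ (-t) :=
  Real.summable_nat_rpow.2 (by linarith)

theorem summable_norm_rpowNegHom {t : ℝ} (ht : 1 < t) :
    Summable fun n => ‖rpowNegHom (by linarith : t ≠ 0) n‖ := by
  simpa [rpowNegHom, abs_of_nonneg, Real.rpow_nonneg] using summable_rpow_neg ht

theorem zetaR_eq_tsum_rpow_neg {t : ℝ} (ht : 1 < t) : zetaR t = ∑' n : ℕ, (n : ℝ) ^ (-t) := by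
  rw [(summable_rpow_neg ht).tsum_eq_zero_add, Nat.cast_zero, Real.zero_rpow (by linarith),
    zero_add, zetaR]
  refine tsum_congr fun n => ?_
  rw [Real.rpow_neg (by positivity), one_div]
  push_cast
  rfl

theorem hasProd_zetaR {t : ℝ} (ht : 1 < t) :
    HasProd (fun p : Nat.Primes => (1 - (p : ℝ) ^ (-t))⁻¹) (zetaR t) := by
  rw [zetaR_eq_tsum_rpow_neg ht]
  exact EulerProduct.eulerProduct_completely_multiplicative_hasProd (summable_norm_rpowNegHom ht)

theorem prod_primeFactors_inv_le_zetaR {t : ℝ} (ht : 1 < t) (q : ℕ) :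
    ∏ p ∈ q.primeFactors, (1 - (p : ℝ) ^ (-t))⁻¹ ≤ zetaR t := by
  have one_le : ∀ p ∈ (q + 1).primesBelow, 1 ≤ (1 - (p : ℝ) ^ (-t))⁻¹ := fun p hp =>
    one_le_inv₀ (one_sub_rpow_neg_pos (Nat.prime_of_mem_primesBelow hp) (by linarith)) |>.2
      (sub_le_self _ (by positivity))
  calc ∏ p ∈ q.primeFactors, (1 - (p : ℝ) ^ (-t))⁻¹
      ≤ ∏ p ∈ (q + 1).primesBelow, (1 - (p : ℝ) ^ (-t))⁻¹ := by
        refine prod_le_prod_of_subset_of_one_le (fun p hp => ?_) ?_ fun p hp _ => one_le p hp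
        · exact Nat.mem_primesBelow.2 ⟨Nat.lt_succ_of_le (Nat.le_of_mem_primeFactors hp),
            Nat.prime_of_mem_primeFactors hp⟩
        · exact fun p hp => inv_nonneg.2
            (one_sub_rpow_neg_pos (Nat.prime_of_mem_primeFactors hp) (by linarith)).le
    _ = ∑' m : (q + 1).smoothNumbers, (m : ℝ) ^ (-t) :=
        EulerProduct.prod_primesBelow_geometric_eq_tsum_smoothNumbers
          (f := (rpowNegHom (by linarith : t ≠ 0) : ℕ →* ℝ)) (summable_norm_rpowNegHom ht).of_norm _
    _ ≤ ∑' m : ℕ, (m : ℝ) ^ (-t) :=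
        (summable_rpow_neg ht).tsum_subtype_le _ _ fun _ => by positivity
    _ = zetaR t := (zetaR_eq_tsum_rpow_neg ht).symm


theorem rpow_le_zetaR_mul_jordanR {t : ℝ} (ht : 1 < t) (q : ℕ) :
    (q : ℝ) ^ t ≤ zetaR t * jordanR t q := by
  set P := ∏ p ∈ q.primeFactors, (1 - (p : ℝ) ^ (-t))
  have hP : 0 < P := prod_pos fun p hp =>
    one_sub_rpow_neg_pos (Nat.prime_of_mem_primeFactors hp) (by linarith)
  have hle : P⁻¹ ≤ zetaR t := by
    simpa [P, prod_inv_distrib] using prod_primeFactors_inv_le_zetaR ht q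
  calc (q : ℝ) ^ t = P⁻¹ * ((q : ℝ) ^ t * P) := by field_simp
    _ ≤ zetaR t * jordanR t q := mul_le_mul_of_nonneg_right hle (by positivity)

theorem one_le_zetaR {t : ℝ} (ht : 1 < t) : 1 ≤ zetaR t := by
  simpa using prod_primeFactors_inv_le_zetaR ht 1

theorem hasProd_primes_ite_dvd {M : Type*} [CommMonoid M] [TopologicalSpace M] {n : ℕ}
    (hn : n ≠ 0) (g : ℕ → M) :
    HasProd (fun p : Nat.Primes => if (p : ℕ) ∣ n then g p else 1)
      (∏ p ∈ n.primeFactors, g p) := by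
  have h : HasProd (fun p : {p // p.Prime} => if p.1 ∣ n then g p else 1)
      (∏ p ∈ n.primeFactors.subtype Nat.Prime, if p.1 ∣ n then g p else 1) :=
    hasProd_prod_of_ne_finset_one fun p hp =>
      if_neg fun hpn => hp (mem_subtype.2 (Nat.mem_primeFactors.2 ⟨p.prop, hpn, hn⟩))
  rwa [prod_subtype_eq_prod_filter (fun p => if p ∣ n then g p else 1),
    filter_true_of_mem fun p hp => Nat.prime_of_mem_primeFactors hp,
    prod_congr rfl fun p hp => if_pos (Nat.dvd_of_mem_primeFactors hp)] at h

section Summand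

noncomputable def crSummand (s : ℕ) (t : ℝ) (m q : ℕ) : ℝ :=
  (μ q : ℝ) * (CRsumD s q m : ℝ) / jordanR t q

variable {s : ℕ} {t : ℝ} {m : ℕ}

theorem crSummand_zero : crSummand s t m 0 = 0 := by simp [crSummand]

theorem crSummand_one : crSummand s t m 1 = 1 := by simp [crSummand, CRsumD_one, jordanR_one]

theorem crSummand_mul_of_coprime {a b : ℕ} (hab : a.Coprime b) :
    crSummand s t m (a * b) = crSummand s t m a * crSummand s t m b := by
  simp only [crSummand, ArithmeticFunction.isMultiplicative_moebius.map_mul_of_coprime hab,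
    CRsumD_mul_of_coprime s m hab, jordanR_mul_of_coprime t hab, Int.cast_mul]
  rw [mul_mul_mul_comm, mul_div_mul_comm]

theorem crSummand_prime_pow {p e : ℕ} (hp : p.Prime) (he : 2 ≤ e) :
    crSummand s t m (p ^ e) = 0 := by
  rw [crSummand, ArithmeticFunction.moebius_apply_prime_pow hp (by omega), if_neg (by omega)]
  simp

theorem tsum_crSummand_prime_pow {p : ℕ} (hp : p.Prime) :
    ∑' e, crSummand s t m (p ^ e) = 1 + crSummand s t m p := by
  rw [tsum_eq_sum (s := range 2) fun e he => crSummand_prime_pow hp (by simp at he; omega),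
    sum_range_succ, sum_range_one, pow_zero, pow_one, crSummand_one]

theorem norm_crSummand_le {n : ℕ} (hs : s ≠ 0) (hn : n ≠ 0) (ht : 1 < t) (q : ℕ) :
    ‖crSummand s t (n ^ s) q‖ ≤ σ s n * zetaR t * (q : ℝ) ^ (-t) := by
  rcases eq_or_ne q 0 with rfl | hq
  · simp [crSummand_zero, Real.zero_rpow (by linarith : -t ≠ 0)]
  have hJ : 0 < jordanR t q := jordanR_pos (by linarith) hq
  have hμ : |(μ q : ℝ)| ≤ 1 := by exact_mod_cast ArithmeticFunction.abs_moebius_le_one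
  have hc : |(CRsumD s q (n ^ s) : ℝ)| ≤ σ s n := by
    exact_mod_cast abs_CRsumD_pow_le_sigma hs hn q
  calc ‖crSummand s t (n ^ s) q‖ = |(μ q : ℝ)| * |(CRsumD s q (n ^ s) : ℝ)| / jordanR t q := by
        rw [crSummand, Real.norm_eq_abs, abs_div, abs_mul, abs_of_pos hJ]
    _ ≤ σ s n / jordanR t q :=
        div_le_div_of_nonneg_right ((mul_le_of_le_one_left (abs_nonneg _) hμ).trans hc) hJ.le
    _ = σ s n * (1 / jordanR t q) := (mul_one_div _ _).symm
    _ ≤ σ s n * (zetaR t / (q : ℝ) ^ t) := by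
        refine mul_le_mul_of_nonneg_left ?_ (by positivity)
        rw [div_le_div_iff₀ hJ (by positivity), one_mul]
        exact rpow_le_zetaR_mul_jordanR ht q
    _ = σ s n * zetaR t * (q : ℝ) ^ (-t) := by rw [Real.rpow_neg (by positivity)]; ring

theorem summable_norm_crSummand {n : ℕ} (hs : s ≠ 0) (hn : n ≠ 0) (ht : 1 < t) :
    Summable fun q => ‖crSummand s t (n ^ s) q‖ :=
  .of_nonneg_of_le (fun _ => norm_nonneg _) (norm_crSummand_le hs hn ht)
    ((summable_rpow_neg ht).mul_left _)

theorem one_add_crSummand_prime {p : ℕ} (hp : p.Prime) {n : ℕ} (hs : s ≠ 0) {k : ℝ}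
    (hsk : 0 < (s : ℝ) + k) :
    1 + crSummand s (s + k) (n ^ s) p =
      (if p ∣ n then 1 - (p : ℝ) ^ (-k) else 1) * (1 - (p : ℝ) ^ (-(s + k)))⁻¹ := by
  have hp0 : (0 : ℝ) < p := by exact_mod_cast hp.pos
  have hx : 1 < (p : ℝ) ^ ((s : ℝ) + k) := Real.one_lt_rpow (by exact_mod_cast hp.one_lt) hsk
  have hneg : (p : ℝ) ^ (-((s : ℝ) + k)) = ((p : ℝ) ^ ((s : ℝ) + k))⁻¹ := Real.rpow_neg hp0.le _
  have hk : (p : ℝ) ^ (-k) = (p : ℝ) ^ s * ((p : ℝ) ^ ((s : ℝ) + k))⁻¹ := by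
    rw [← hneg, ← Real.rpow_natCast, ← Real.rpow_add hp0]
    ring_nf
  rw [crSummand, ArithmeticFunction.moebius_apply_prime hp, CRsumD_prime _ _ hp, jordanR_prime hp,
    hneg, hk]
  simp only [Nat.pow_dvd_pow_iff hs]
  generalize (p : ℝ) ^ ((s : ℝ) + k) = x at hx ⊢
  have : x - 1 ≠ 0 := by linarith
  split_ifs <;> push_cast <;> field_simp <;> ring

theorem hasSum_crSummand {n : ℕ} (hs : s ≠ 0) (hn : n ≠ 0) {k : ℝ} (hk : 0 < k) :
    HasSum (crSummand s (s + k) (n ^ s))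
      (zetaR (s + k) * ∏ p ∈ n.primeFactors, (1 - (p : ℝ) ^ (-k))) := by
  have ht : 1 < (s : ℝ) + k := by
    have : (1 : ℝ) ≤ s := by exact_mod_cast Nat.one_le_iff_ne_zero.2 hs
    linarith
  have hsum := summable_norm_crSummand hs hn ht
  have euler := EulerProduct.eulerProduct_hasProd (f := crSummand s (s + k) (n ^ s))
    crSummand_one (fun hab => crSummand_mul_of_coprime hab) hsum crSummand_zero
  have euler_factor : ∀ p : Nat.Primes, ∑' e, crSummand s (s + k) (n ^ s) (p ^ e) =
      (if (p : ℕ) ∣ n then 1 - (p : ℝ) ^ (-k) else 1) * (1 - (p : ℝ) ^ (-(s + k)))⁻¹ :=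
    fun p => by
      rw [tsum_crSummand_prime_pow p.prop, one_add_crSummand_prime p.prop hs (by linarith)]
  simp only [euler_factor] at euler
  have hprod := (hasProd_primes_ite_dvd hn fun p => 1 - (p : ℝ) ^ (-k)).mul (hasProd_zetaR ht)
  rw [mul_comm, ← euler.unique hprod]
  exact hsum.of_norm.hasSum

end Summand

end CohenRamanujan

open CohenRamanujan in
theorem jordan_CohenRamanujan_expansion (s k n : ℕ) (hs : 0 < s) (hk : 0 < k)
    (hn : 0 < n) :
    Summable (fun q : ℕ =>
        |(ArithmeticFunction.moebius (q + 1) : ℝ) /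
            (zetaR (s + k) * jordanR (s + k) (q + 1)) * (CRsumD s (q + 1) (n ^ s) : ℝ)|) ∧
      HasSum (fun q : ℕ =>
          (ArithmeticFunction.moebius (q + 1) : ℝ) /
            (zetaR (s + k) * jordanR (s + k) (q + 1)) * (CRsumD s (q + 1) (n ^ s) : ℝ))
        (jordanR k n / (n : ℝ) ^ k) := by
  have ht : (1 : ℝ) < s + k := by
    have : (1 : ℝ) ≤ s := by exact_mod_cast hs
    have : (0 : ℝ) < k := by exact_mod_cast hk
    linarith
  have hζ : zetaR (s + k) ≠ 0 := (one_pos.trans_le (one_le_zetaR ht)).ne'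
  have hterm : ∀ q : ℕ, (μ (q + 1) : ℝ) / (zetaR (s + k) * jordanR (s + k) (q + 1)) *
      (CRsumD s (q + 1) (n ^ s) : ℝ) = crSummand s (s + k) (n ^ s) (q + 1) / zetaR (s + k) :=
    fun q => by rw [crSummand]; ring
  have hJ : jordanR k n / (n : ℝ) ^ k = ∏ p ∈ n.primeFactors, (1 - (p : ℝ) ^ (-(k : ℝ))) := by
    rw [jordanR, Real.rpow_natCast, mul_div_cancel_left₀ _ (by positivity)]
  simp only [hterm, hJ, abs_div]
  constructor
  · exact ((summable_norm_crSummand hs.ne' hn.ne' ht).comp_injective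
      (add_left_injective 1)).div_const _
  · have hsum := hasSum_crSummand hs.ne' hn.ne' (by exact_mod_cast hk : (0 : ℝ) < k)
    rw [← hasSum_nat_add_iff' 1] at hsum
    simpa [crSummand_zero, mul_div_cancel_left₀ _ hζ] using hsum.div_const (zetaR (s + k))
end

section
/- For positive integers s, r, m and an s-power-free positive integer k (no prime power p^s divides k), c_r^s(m^s · k) = c_r^s(m^s). -/
open Finset

theorem CRsumD_spowfree (s r m k : ℕ) (hs : 0 < s) (hr : 0 < r) (hm : 0 < m)
    (hk : 0 < k) (hkfree : SPowFree s k) :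
    CRsumD s r (m ^ s * k) = CRsumD s r (m ^ s) := by
  unfold CRsumD
  congr 1
  apply Finset.filter_congr
  intro d hd
  simp only [Nat.mem_divisors] at hd
  have hd0 : 0 < d := Nat.pos_of_dvd_of_pos hd.1 hr
  constructor
  · intro h
    have hdm : d ∣ m := by
      rw [← Nat.factorization_le_iff_dvd hd0.ne' hm.ne']
      intro p
      by_cases hp : p.Prime
      · have h' : (d ^ s).factorization ≤ (m ^ s * k).factorization := by
          rw [Nat.factorization_le_iff_dvd (by positivity) (by positivity)]
          exact h
        have h'' := h' p
        rw [Nat.factorization_mul (by positivity) hk.ne', Nat.factorization_pow,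
          Nat.factorization_pow] at h''
        simp only [Finsupp.coe_add, Finsupp.coe_smul, Pi.add_apply, Pi.smul_apply,
          smul_eq_mul] at h''
        have hkp : k.factorization p < s := by
          by_contra hle
          push_neg at hle
          exact hkfree p hp.one_lt ((Nat.Prime.pow_dvd_iff_le_factorization hp hk.ne').mpr hle)
        have : s * d.factorization p < s * (m.factorization p + 1) := by
          calc s * d.factorization p ≤ s * m.factorization p + k.factorization p := h''
            _ < s * m.factorization p + s := by omega
            _ = s * (m.factorization p + 1) := by ring
        have := Nat.lt_of_mul_lt_mul_left this
        omega
      · simp [Nat.factorization_eq_zero_of_not_prime d hp]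
    exact pow_dvd_pow_of_dvd hdm s
  · intro h; exact h.mul_right k
end
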